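/- arXiv:1603.02562 — 2 statements merged into one kernel-verified Lean document; each statement's English description precedes it below -/
import Mathlib

section
/- If q = 2 and n ≥ 3, then the basis {α_1, …, α_n} of V is a resolving set of the non-zero component graph Γ(V). -/
/-- `W` is a resolving set of `G`: distinct vertices have distinct distance vectors to `W`. -/
def Resolves {α : Type*} (G : SimpleGraph α) (W : Set α) : Prop :=
  ∀ u v : α, (∀ w ∈ W, G.dist u w = G.dist v w) → u = v

/-- The metric dimension of `G`: minimum cardinality of a resolving set. -/
noncomputable def metricDim {α : Type*} (G : SimpleGraph α) : ℕ :=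
  sInf {k | ∃ W : Set α, W.ncard = k ∧ Resolves G W}

/-- A minimal resolving set: no proper subset resolves. -/
def MinimalResolves {α : Type*} (G : SimpleGraph α) (W : Set α) : Prop :=
  Resolves G W ∧ ∀ W' ⊂ W, ¬ Resolves G W'

/-- The exchange property for minimal resolving sets. -/
def ExchangeProperty {α : Type*} (G : SimpleGraph α) : Prop :=
  ∀ W₁ W₂ : Set α, MinimalResolves G W₁ → MinimalResolves G W₂ →
    ∀ r ∈ W₁, ∃ s ∈ W₂, MinimalResolves G (insert r (W₂ \ {s}))

/-- `u` and `v` are twins: equal open neighborhoods or equal closed neighborhoods. -/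
def Twins {α : Type*} (G : SimpleGraph α) (u v : α) : Prop :=
  G.neighborSet u = G.neighborSet v ∨
    insert u (G.neighborSet u) = insert v (G.neighborSet v)

/-- The non-zero component graph of `Fin n → F` with respect to the standard basis:
vertices are the non-zero vectors, adjacency means the supports (skeletons) intersect. -/
def NZCGraph (F : Type*) [Field F] (n : ℕ) :
    SimpleGraph {v : Fin n → F // v ≠ 0} where
  Adj u v := u ≠ v ∧ ∃ i, (u : Fin n → F) i ≠ 0 ∧ (v : Fin n → F) i ≠ 0
  symm := by
    constructor
    rintro u v ⟨h, i, hu, hv⟩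
    exact ⟨h.symm, i, hv, hu⟩
  loopless := by constructor; rintro u ⟨h, _⟩; exact h rfl

/-! The graph is connected, since two non-zero vectors are joined through a vector whose support
meets both supports; this matters because `SimpleGraph.dist` is `0` between unreachable vertices.
Hence `dist u eᵢ ≤ 1` holds exactly when `uᵢ ≠ 0`, so the distances to the basis vectors
determine the support of `u`, and over `𝔽₂` a vector is determined by its support. -/

namespace NZCGraph

variable {F : Type*} [Field F] {n : ℕ} {u v : {v : Fin n → F // v ≠ 0}}

lemma adj_or_eq_iff :
    (NZCGraph F n).Adj u v ∨ u = v ↔ ∃ i, (u : Fin n → F) i ≠ 0 ∧ (v : Fin n → F) i ≠ 0 := by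
  refine ⟨?_, fun h => or_iff_not_imp_right.mpr fun hne => ⟨hne, h⟩⟩
  rintro (⟨-, h⟩ | rfl)
  · exact h
  · obtain ⟨i, hi⟩ := Function.ne_iff.mp u.2
    exact ⟨i, hi, hi⟩

lemma reachable_of_apply_ne_zero {i : Fin n} (hu : (u : Fin n → F) i ≠ 0)
    (hv : (v : Fin n → F) i ≠ 0) : (NZCGraph F n).Reachable u v := by
  obtain h | rfl := adj_or_eq_iff.mpr ⟨i, hu, hv⟩
  · exact h.reachable
  · rfl

lemma preconnected : (NZCGraph F n).Preconnected := by
  intro u v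
  obtain ⟨i, hi⟩ := Function.ne_iff.mp u.2
  obtain ⟨j, hj⟩ := Function.ne_iff.mp v.2
  -- `Pi.single i 1 + Pi.single j 1` would vanish when `i = j` in characteristic 2
  let w : {v : Fin n → F // v ≠ 0} :=
    ⟨fun k => if k = i ∨ k = j then 1 else 0, Function.ne_iff.mpr ⟨i, by simp⟩⟩
  exact (reachable_of_apply_ne_zero (v := w) hi (by simp [w])).trans
    (reachable_of_apply_ne_zero (by simp [w]) hj)

lemma dist_le_one_iff :
    (NZCGraph F n).dist u v ≤ 1 ↔ ∃ i, (u : Fin n → F) i ≠ 0 ∧ (v : Fin n → F) i ≠ 0 := by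
  rw [← Nat.cast_le (α := ℕ∞), (preconnected u v).coe_dist_eq_edist, Nat.cast_one,
    SimpleGraph.edist_le_one_iff_adj_or_eq, adj_or_eq_iff]

def basisVertex (i : Fin n) : {v : Fin n → F // v ≠ 0} :=
  ⟨Pi.single i 1, by simp⟩

lemma dist_basisVertex_le_one_iff {i : Fin n} :
    (NZCGraph F n).dist u (basisVertex i) ≤ 1 ↔ (u : Fin n → F) i ≠ 0 := by
  simp [dist_le_one_iff, basisVertex, Pi.single_apply]

end NZCGraph

lemma ZMod.two_eq_of_ne_zero_iff : ∀ {a b : ZMod 2}, (a ≠ 0 ↔ b ≠ 0) → a = b := by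
  decide

theorem stmt8_general (n : ℕ) :
    Resolves (NZCGraph (ZMod 2) n)
      {v : {v : Fin n → ZMod 2 // v ≠ 0} |
        ∃ i : Fin n, (v : Fin n → ZMod 2) = Pi.single i 1} := by
  intro u v h
  ext i
  apply ZMod.two_eq_of_ne_zero_iff
  rw [← NZCGraph.dist_basisVertex_le_one_iff, ← NZCGraph.dist_basisVertex_le_one_iff,
    h _ ⟨i, rfl⟩]

theorem stmt8 (n : ℕ) (hn : 3 ≤ n) :
    Resolves (NZCGraph (ZMod 2) n)
      {v : {v : Fin n → ZMod 2 // v ≠ 0} |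
        ∃ i : Fin n, (v : Fin n → ZMod 2) = Pi.single i 1} :=
  stmt8_general n
end

section
/- For V a 3-dimensional vector space over the field with 2 elements with basis {α_1, α_2, α_3}, the set {α_1, α_1+α_3, α_3} is a minimum resolving set of Γ(V) but is not a basis of V. -/
/-! The vertex `α₁ + α₂ + α₃` is adjacent to every other vertex of `Γ(V)`, so `Γ(V)` has diameter
two and the distance from a vertex outside a resolving set `W` to a vertex of `W` only records
adjacency. Hence at most `2 ^ |W|` vertices lie outside `W`, and `7 ≤ |W| + 2 ^ |W|` forces
`|W| ≥ 3`. That `{α₁, α₁ + α₃, α₃}` resolves is a finite check, and it is linearly dependent since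
its middle vector is the sum of the other two. -/

open SimpleGraph

theorem SimpleGraph.ediam_le_two_of_forall_adj {V : Type*} {G : SimpleGraph V} (c : V)
    (hc : ∀ v, c ≠ v → G.Adj c v) : G.ediam ≤ 2 :=
  calc G.ediam ≤ 2 * G.eccent c := G.ediam_le_two_mul_eccent c
    _ ≤ 2 * 1 := by gcongr; exact (G.eccent_le_one_iff c).mpr hc
    _ = 2 := mul_one 2

theorem SimpleGraph.dist_eq_ite_of_ediam_le_two {V : Type*} [DecidableEq V] {G : SimpleGraph V}
    [DecidableRel G.Adj] (hG : G.ediam ≤ 2) (u v : V) :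
    G.dist u v = if u = v then 0 else if G.Adj u v then 1 else 2 := by
  split_ifs with huv hadj
  · simp [huv]
  · exact dist_eq_one_iff_adj.mpr hadj
  · have hgt : 1 < G.edist u v := by
      rw [← not_le, edist_le_one_iff_adj_or_eq]
      tauto
    have htwo : G.edist u v = 2 :=
      le_antisymm (G.edist_le_ediam.trans hG) (Order.add_one_le_of_lt hgt)
    simp [dist, htwo]

theorem metricDim_eq_ncard {V : Type*} {G : SimpleGraph V} {W : Set V} (hW : Resolves G W)
    (hmin : ∀ W' : Set V, Resolves G W' → W.ncard ≤ W'.ncard) : metricDim G = W.ncard :=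
  le_antisymm (Nat.sInf_le ⟨W, rfl, hW⟩)
    (le_csInf ⟨_, W, rfl, hW⟩ fun _ ⟨W', hcard, hW'⟩ => hcard ▸ hmin W' hW')

theorem Resolves.card_le_ncard_add_two_pow {V : Type*} [Finite V] {G : SimpleGraph V}
    (hG : G.ediam ≤ 2) {W : Set V} (hW : Resolves G W) : Nat.card V ≤ W.ncard + 2 ^ W.ncard := by
  classical
  let f : (Wᶜ : Set V) → W → Bool := fun v w => decide (G.Adj v w)
  have hf : f.Injective := by
    rintro ⟨v, hv⟩ ⟨v', hv'⟩ hvv'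
    refine Subtype.ext (hW v v' fun w hw => ?_)
    have hadj : G.Adj v w ↔ G.Adj v' w := by simpa [f] using congrFun hvv' ⟨w, hw⟩
    rw [dist_eq_ite_of_ediam_le_two hG, dist_eq_ite_of_ediam_le_two hG,
      if_neg (ne_of_mem_of_not_mem hw hv).symm, if_neg (ne_of_mem_of_not_mem hw hv').symm, hadj]
  calc Nat.card V = W.ncard + Wᶜ.ncard := (Set.ncard_add_ncard_compl W).symm
    _ ≤ W.ncard + 2 ^ W.ncard := by
      gcongr
      simpa [Nat.card_fun] using Nat.card_le_card_of_injective f hf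

namespace NZCGraph

variable {F : Type*} [Field F] {n : ℕ}

instance [DecidableEq F] : DecidableRel (NZCGraph F n).Adj := fun u v =>
  inferInstanceAs (Decidable (u ≠ v ∧ ∃ i, (u : Fin n → F) i ≠ 0 ∧ (v : Fin n → F) i ≠ 0))

theorem ediam_le_two [NeZero n] : (NZCGraph F n).ediam ≤ 2 :=
  ediam_le_two_of_forall_adj ⟨fun _ => 1, Function.ne_iff.mpr ⟨0, one_ne_zero⟩⟩ fun v hv =>
    have ⟨i, hi⟩ := Function.ne_iff.mp v.2
    ⟨hv, i, one_ne_zero, hi⟩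

end NZCGraph

theorem not_linearIndepOn_of_add_mem {K V : Type*} [DivisionRing K] [AddCommGroup V] [Module K V]
    {s : Set V} {x y : V} (hx : x ∈ s) (hy : y ∈ s) (hxy : x + y ∈ s) (hx0 : x ≠ 0) (hy0 : y ≠ 0) :
    ¬ LinearIndepOn K id s := fun h =>
  h.notMem_span hxy <| Submodule.add_mem _
    (Submodule.subset_span ⟨x, ⟨hx, by simpa using hy0⟩, rfl⟩)
    (Submodule.subset_span ⟨y, ⟨hy, by simpa using hx0⟩, rfl⟩)

theorem stmt12 :
    Resolves (NZCGraph (ZMod 2) 3)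
      {x : {v : Fin 3 → ZMod 2 // v ≠ 0} |
        (x : Fin 3 → ZMod 2) = Pi.single 0 1 ∨
        (x : Fin 3 → ZMod 2) = Pi.single 0 1 + Pi.single 2 1 ∨
        (x : Fin 3 → ZMod 2) = Pi.single 2 1} ∧
    Set.ncard {x : {v : Fin 3 → ZMod 2 // v ≠ 0} |
        (x : Fin 3 → ZMod 2) = Pi.single 0 1 ∨
        (x : Fin 3 → ZMod 2) = Pi.single 0 1 + Pi.single 2 1 ∨
        (x : Fin 3 → ZMod 2) = Pi.single 2 1} = metricDim (NZCGraph (ZMod 2) 3) ∧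
    ¬ (Submodule.span (ZMod 2)
        ({Pi.single 0 1, Pi.single 0 1 + Pi.single 2 1, Pi.single 2 1} :
          Set (Fin 3 → ZMod 2)) = ⊤ ∧
      LinearIndependent (ZMod 2)
        (fun x : ({Pi.single 0 1, Pi.single 0 1 + Pi.single 2 1, Pi.single 2 1} :
          Set (Fin 3 → ZMod 2)) => (x : Fin 3 → ZMod 2))) := by
  set W : Set {v : Fin 3 → ZMod 2 // v ≠ 0} := {x |
        (x : Fin 3 → ZMod 2) = Pi.single 0 1 ∨
        (x : Fin 3 → ZMod 2) = Pi.single 0 1 + Pi.single 2 1 ∨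
        (x : Fin 3 → ZMod 2) = Pi.single 2 1}
  have hW : Resolves (NZCGraph (ZMod 2) 3) W := by
    simp only [Resolves, dist_eq_ite_of_ediam_le_two NZCGraph.ediam_le_two, W, Set.mem_ofPred_eq]
    decide
  have hcard : W.ncard = 3 := by
    rw [Set.ncard_eq_toFinset_card']
    decide
  have hV : Nat.card {v : Fin 3 → ZMod 2 // v ≠ 0} = 7 := by
    rw [Nat.card_eq_fintype_card]
    decide
  refine ⟨hW, (metricDim_eq_ncard hW fun W' hW' => ?_).symm, fun h => ?_⟩
  · have hbound := hW'.card_le_ncard_add_two_pow NZCGraph.ediam_le_two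
    rw [hV] at hbound
    rw [hcard]
    by_contra! hlt
    interval_cases W'.ncard <;> norm_num at hbound
  · exact not_linearIndepOn_of_add_mem (K := ZMod 2) (x := Pi.single 0 1) (y := Pi.single 2 1)
      (by simp) (by simp) (by simp) (by simp) (by simp) h.2
end
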